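/- arXiv:2403.03569 — 2 statements merged into one kernel-verified Lean document; each statement's English description precedes it below -/
import Mathlib

section
/- The construction attaining the upper bound: for C = {{1,2},{3,4},…,{2n−1,2n}} (n even-indexed pair-classes), define for each pair of classes I < J the bipartition M_{I,J} placing I and all even numbers outside I∪J on one side, and J and all odd numbers outside I∪J on the other side. Then the n(n−1)/2 models so defined are pairwise non-equivalent (no two separate the same set of class pairs). -/
/-!
`M_{I,J}` separates exactly the pair `{I, J}`: a class lies in `M_{I,J}` only if its odd
element does, which happens only for `I`, and a class lies in the complement only if its even
element does, which happens only for `J`. Distinct pairs therefore give distinct separated sets.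
-/

/-- The classes `C_k = {2k+1, 2k+2}` (for `k = 0, …, n-1`), i.e. `{1,2}, {3,4}, …`. -/
def Cls (n : ℕ) (i : Fin n) : Set ℕ := {2 * (i : ℕ) + 1, 2 * (i : ℕ) + 2}

/-- The model `M_{I,J}` for classes `I ≠ J`: one part contains `I` together with all even
numbers of `E = {1, …, 2n}` outside `I ∪ J`; the other part (its complement) contains `J`
together with all odd numbers outside `I ∪ J`. -/
def Mdl (n : ℕ) (i j : Fin n) : Set ℕ :=
  Cls n i ∪ {x | 1 ≤ x ∧ x ≤ 2 * n ∧ x ∉ Cls n i ∪ Cls n j ∧ Even x}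

/-- The set of (ordered versions of the) unordered pairs of classes separated by the
bipartition `(M, Mᶜ)`. -/
def SepSet (n : ℕ) (M : Set ℕ) : Set (Fin n × Fin n) :=
  {p | (Cls n p.1 ⊆ M ∧ Cls n p.2 ⊆ Mᶜ) ∨ (Cls n p.2 ⊆ M ∧ Cls n p.1 ⊆ Mᶜ)}

section Mdl

variable {n : ℕ} {i j : Fin n}

lemma mem_Mdl_iff {x : ℕ} : x ∈ Mdl n i j ↔ (x = 2 * i + 1 ∨ x = 2 * i + 2) ∨
    (1 ≤ x ∧ x ≤ 2 * n ∧ ¬((x = 2 * i + 1 ∨ x = 2 * i + 2) ∨ (x = 2 * j + 1 ∨ x = 2 * j + 2)) ∧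
      x % 2 = 0) := by
  simp only [Mdl, Cls, Set.mem_union, Set.mem_insert_iff, Set.mem_singleton_iff,
    Set.mem_ofPred_eq, Nat.even_iff]

lemma odd_mem_Mdl_iff (a : Fin n) : 2 * (a : ℕ) + 1 ∈ Mdl n i j ↔ a = i := by
  rw [mem_Mdl_iff, Fin.ext_iff]
  omega

lemma even_mem_Mdl_iff (hij : i ≠ j) (a : Fin n) : 2 * (a : ℕ) + 2 ∈ Mdl n i j ↔ a ≠ j := by
  rw [Ne, Fin.ext_iff] at hij
  rw [mem_Mdl_iff, Ne, Fin.ext_iff]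
  omega

lemma Cls_subset_Mdl_iff (hij : i ≠ j) (a : Fin n) : Cls n a ⊆ Mdl n i j ↔ a = i := by
  rw [Cls, Set.insert_subset_iff, Set.singleton_subset_iff, odd_mem_Mdl_iff,
    even_mem_Mdl_iff hij, and_iff_left_iff_imp]
  rintro rfl
  exact hij

lemma Cls_subset_compl_Mdl_iff (hij : i ≠ j) (a : Fin n) : Cls n a ⊆ (Mdl n i j)ᶜ ↔ a = j := by
  rw [Cls, Set.insert_subset_iff, Set.singleton_subset_iff, Set.mem_compl_iff,
    Set.mem_compl_iff, odd_mem_Mdl_iff, even_mem_Mdl_iff hij, not_not, and_iff_right_iff_imp]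
  rintro rfl
  exact hij.symm

lemma SepSet_Mdl (hij : i ≠ j) : SepSet n (Mdl n i j) = {(i, j), (j, i)} := by
  ext ⟨a, b⟩
  simp only [SepSet, Set.mem_ofPred_eq, Set.mem_insert_iff, Set.mem_singleton_iff,
    Prod.mk.injEq, Cls_subset_Mdl_iff hij, Cls_subset_compl_Mdl_iff hij]
  tauto

end Mdl

theorem upper_bound_construction_nonequivalent_general (n : ℕ)
    (i j k l : Fin n) (hij : i < j) (hkl : k < l) (hne : (i, j) ≠ (k, l)) :
    SepSet n (Mdl n i j) ≠ SepSet n (Mdl n k l) := by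
  rw [SepSet_Mdl hij.ne, SepSet_Mdl hkl.ne, Ne, Set.pair_eq_pair_iff]
  rintro (⟨h, -⟩ | ⟨h, -⟩)
  · exact hne h
  · obtain ⟨rfl, rfl⟩ := Prod.mk.inj h
    exact lt_asymm hij hkl

/-- The construction attaining the upper bound `F(C) = n(n-1)/2`: for the classes
`{1,2}, {3,4}, …, {2n-1,2n}` (`n` even), the `n(n-1)/2` models `M_{I,J}` are pairwise
non-equivalent — models built from distinct pairs of classes separate distinct sets of
class pairs. -/
theorem upper_bound_construction_nonequivalent (n : ℕ) (hn : Even n)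
    (i j k l : Fin n) (hij : i < j) (hkl : k < l) (hne : (i, j) ≠ (k, l)) :
    SepSet n (Mdl n i j) ≠ SepSet n (Mdl n k l) :=
  upper_bound_construction_nonequivalent_general n i j k l hij hkl hne
end

section
/- If a set S of models separates all pairs of classes and some model M ∈ S separates no fundamental pair not separated by another member of S, then S \ {M} still separates all pairs of classes; hence a minimum separating set cannot contain such a redundant model. -/
/-- `M` (viewed as the bipartition `(M, Mᶜ)` of `E`) separates the ordered pair `(I, J)`. -/
def Separates {E : Type*} (M I J : Set E) : Prop := I ⊆ M ∧ J ⊆ Mᶜ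

/-- `M` separates the unordered pair `{I, J}`. -/
def Sep2 {E : Type*} (M I J : Set E) : Prop := Separates M I J ∨ Separates M J I

/-! Every pair of classes is either fundamental, hence separated by a member of `S` and then,
by redundancy of `M`, by one other than `M`; or dominated by a fundamental pair, and a model other
than `M` separating that pair separates it too. So `S.erase M` is a smaller separating set. -/

theorem Finset.exists_mem_ne_of_imp {α : Type*} {S : Finset α} {M : α} {P : α → Prop}
    (hP : ∃ x ∈ S, P x) (hM : P M → ∃ x ∈ S, x ≠ M ∧ P x) : ∃ x ∈ S, x ≠ M ∧ P x := by
  obtain ⟨x, hxS, hx⟩ := hP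
  by_cases hxM : x = M
  · exact hM (hxM ▸ hx)
  · exact ⟨x, hxS, hxM, hx⟩

theorem Finset.not_forall_card_le_of_erase {α : Type*} [DecidableEq α] {S : Finset α} {M : α}
    (hM : M ∈ S) {P : Finset α → Prop} (hP : P (S.erase M)) :
    ¬ ∀ S', P S' → S.card ≤ S'.card := fun hmin =>
  (Finset.card_erase_lt_of_mem hM).not_ge (hmin _ hP)

theorem redundant_model_removable_general {E : Type*}
    (C : Set (Set E))
    (Fundamental : Set E → Set E → Prop)
    (S : Finset (Set E)) (M : Set E) (hM : M ∈ S)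
    -- `S` separates all pairs of classes
    (hS : ∀ I ∈ C, ∀ J ∈ C, I ≠ J → ∃ M' ∈ S, Sep2 M' I J)
    -- every fundamental pair separated by `M` is also separated by another member of `S`
    (hred : ∀ I ∈ C, ∀ J ∈ C, I ≠ J → Fundamental I J → Sep2 M I J →
      ∃ M' ∈ S, M' ≠ M ∧ Sep2 M' I J)
    -- every non-fundamental pair is dominated (`c < p`) by a fundamental pair: any model
    -- separating the fundamental pair also separates it
    (hdom : ∀ I ∈ C, ∀ J ∈ C, I ≠ J → ¬ Fundamental I J →
      ∃ K ∈ C, ∃ L ∈ C, K ≠ L ∧ Fundamental K L ∧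
        ∀ M' : Set E, Sep2 M' K L → Sep2 M' I J) :
    (∀ I ∈ C, ∀ J ∈ C, I ≠ J → ∃ M' ∈ S, M' ≠ M ∧ Sep2 M' I J) ∧
    ((∀ S' : Finset (Set E),
        (∀ I ∈ C, ∀ J ∈ C, I ≠ J → ∃ M' ∈ S', Sep2 M' I J) → S.card ≤ S'.card) →
      False) := by
  classical
  have hfund : ∀ I ∈ C, ∀ J ∈ C, I ≠ J → Fundamental I J → ∃ M' ∈ S, M' ≠ M ∧ Sep2 M' I J :=
    fun I hI J hJ hIJ hF =>
      Finset.exists_mem_ne_of_imp (hS I hI J hJ hIJ) (hred I hI J hJ hIJ hF)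
  have hall : ∀ I ∈ C, ∀ J ∈ C, I ≠ J → ∃ M' ∈ S, M' ≠ M ∧ Sep2 M' I J := by
    intro I hI J hJ hIJ
    by_cases hF : Fundamental I J
    · exact hfund I hI J hJ hIJ hF
    · obtain ⟨K, hK, L, hL, hKL, hFKL, hKL_IJ⟩ := hdom I hI J hJ hIJ hF
      obtain ⟨M', hM'S, hM'M, hsep⟩ := hfund K hK L hL hKL hFKL
      exact ⟨M', hM'S, hM'M, hKL_IJ M' hsep⟩
  refine ⟨hall, Finset.not_forall_card_le_of_erase hM fun I hI J hJ hIJ => ?_⟩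
  obtain ⟨M', hM'S, hM'M, hsep⟩ := hall I hI J hJ hIJ
  exact ⟨M', Finset.mem_erase.mpr ⟨hM'M, hM'S⟩, hsep⟩

/-- If `S` separates all pairs of classes and `M ∈ S` separates no fundamental pair not
separated by another member of `S`, then `S \ {M}` still separates all pairs; hence a
minimum-size separating set cannot contain such a redundant model. -/
theorem redundant_model_removable {E : Type*}
    (C : Set (Set E)) (hdisj : C.Pairwise Disjoint)
    (Fundamental : Set E → Set E → Prop)
    (S : Finset (Set E)) (M : Set E) (hM : M ∈ S)
    -- `S` separates all pairs of classes
    (hS : ∀ I ∈ C, ∀ J ∈ C, I ≠ J → ∃ M' ∈ S, Sep2 M' I J)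
    -- every fundamental pair separated by `M` is also separated by another member of `S`
    (hred : ∀ I ∈ C, ∀ J ∈ C, I ≠ J → Fundamental I J → Sep2 M I J →
      ∃ M' ∈ S, M' ≠ M ∧ Sep2 M' I J)
    -- every non-fundamental pair is dominated (`c < p`) by a fundamental pair: any model
    -- separating the fundamental pair also separates it
    (hdom : ∀ I ∈ C, ∀ J ∈ C, I ≠ J → ¬ Fundamental I J →
      ∃ K ∈ C, ∃ L ∈ C, K ≠ L ∧ Fundamental K L ∧
        ∀ M' : Set E, Sep2 M' K L → Sep2 M' I J) :
    (∀ I ∈ C, ∀ J ∈ C, I ≠ J → ∃ M' ∈ S, M' ≠ M ∧ Sep2 M' I J) ∧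
    ((∀ S' : Finset (Set E),
        (∀ I ∈ C, ∀ J ∈ C, I ≠ J → ∃ M' ∈ S', Sep2 M' I J) → S.card ≤ S'.card) →
      False) :=
  redundant_model_removable_general C Fundamental S M hM hS hred hdom
end
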